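/- Let A = C(S¹, ℂ) be the C*-algebra of continuous complex-valued functions on the unit circle S¹ = {z ∈ ℂ : |z| = 1} and define E : A → A by (E f)(z) = (f(z) + f(z̄))/2, where z̄ is the complex conjugate of z. Then E is a conditional expectation on A, the map 2·E − id_A is completely positive, and yet E admits no finite quasi-basis: there do not exist n ∈ ℕ and u₁, …, u_n ∈ A with f = Σ_{i=1}^{n} u_i · E(u_i* · f) for every f ∈ A. -/

import Mathlib

open scoped ComplexOrder

noncomputable section

/-- `z̄` lies on the unit circle whenever `z` does. -/
lemma star_mem_sphere (z : Metric.sphere (0 : ℂ) 1) :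
    star (z : ℂ) ∈ Metric.sphere (0 : ℂ) 1 := by
  have hz : ‖(z : ℂ)‖ = 1 := by
    have h := z.2
    simp only [Metric.mem_sphere, dist_zero_right] at h
    exact h
  simp only [Metric.mem_sphere, dist_zero_right, norm_star]
  exact hz

/-- Complex conjugation as a self-map of the unit circle. -/
def conjCircle : C(Metric.sphere (0 : ℂ) 1, Metric.sphere (0 : ℂ) 1) :=
  ⟨fun z => ⟨star (z : ℂ), star_mem_sphere z⟩,
    (continuous_star.comp continuous_subtype_val).subtype_mk fun z => star_mem_sphere z⟩

/-- The conditional expectation `(E f)(z) = (f(z) + f(z̄))/2` on `C(S¹, ℂ)`. -/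
def Econj : C(Metric.sphere (0 : ℂ) 1, ℂ) → C(Metric.sphere (0 : ℂ) 1, ℂ) :=
  fun f => (2⁻¹ : ℂ) • (f + f.comp conjCircle)

variable {A : Type*} [CStarAlgebra A] [PartialOrder A] [StarOrderedRing A]

/-- A conditional expectation on a unital C*-algebra `A`: a linear, idempotent, unital,
positive, contractive (norm-one, since `E 1 = 1`) map whose range is a C*-subalgebra
`B = E(A)` (closed under multiplication and star) and which is a `B`-bimodule map. -/
structure IsCondExp (E : A → A) : Prop where
  map_add : ∀ a b : A, E (a + b) = E a + E b
  map_smul : ∀ (c : ℂ) (a : A), E (c • a) = c • E a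
  idem : ∀ a : A, E (E a) = E a
  map_one : E 1 = 1
  pos : ∀ a : A, 0 ≤ a → 0 ≤ E a
  contractive : ∀ a : A, ‖E a‖ ≤ ‖a‖
  range_mul : ∀ a b : A, E (E a * E b) = E a * E b
  range_star : ∀ a : A, E (star (E a)) = star (E a)
  bimod : ∀ a b c : A, E (E b * a * E c) = E b * E a * E c

/-- A map `Φ` on a (C*-)algebra `R` is completely positive if for every `n ≥ 1` its entrywise
application to `n × n` matrices over `R` maps positive elements (i.e. elements of the form
`star B * B`, which are exactly the positive elements of the C*-algebra of matrices over a
C*-algebra) to positive elements. -/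
def IsCompletelyPositive {R : Type*} [Ring R] [StarRing R] (Φ : R → R) : Prop :=
  ∀ (n : ℕ) (M : Matrix (Fin n) (Fin n) R),
    (∃ B : Matrix (Fin n) (Fin n) R, M = star B * B) →
    ∃ C : Matrix (Fin n) (Fin n) R, M.map Φ = star C * C

/-! `Econj` averages over the involution `z ↦ z̄`, so the conditional-expectation axioms hold for
the average over any involution `σ` of a compact space, and `2 E - id` is composition with `σ`, a
*-homomorphism, hence completely positive. If `(uᵢ)` were a finite quasi-basis, evaluating the
quasi-basis identity at `x` against a function separating `x` from `σ x` shows that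
`g = ∑ uᵢ* uᵢ` is `1` at fixed points of `σ` and `2` at moved points; but the fixed point `1` of
`z ↦ z̄` is a limit of moved points, contradicting the continuity of `g`. -/

lemma isCompletelyPositive_of_starRingHom {R F : Type*} [Ring R] [StarRing R] [FunLike F R R]
    [RingHomClass F R R] [StarHomClass F R R] (φ : F) : IsCompletelyPositive φ := by
  rintro n M ⟨B, rfl⟩
  refine ⟨B.map φ, ?_⟩
  rw [Matrix.map_mul, Matrix.star_eq_conjTranspose, Matrix.star_eq_conjTranspose,
    Matrix.conjTranspose_map _ fun a => map_star φ a]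

section Symmetrize

variable {X : Type*} [TopologicalSpace X]

def symmetrize (σ : C(X, X)) (f : C(X, ℂ)) : C(X, ℂ) := (2⁻¹ : ℂ) • (f + f.comp σ)

variable {σ : C(X, X)}

@[simp]
lemma symmetrize_apply (f : C(X, ℂ)) (x : X) :
    symmetrize σ f x = 2⁻¹ * (f x + f (σ x)) := rfl

lemma two_smul_symmetrize_sub (f : C(X, ℂ)) : (2 : ℝ) • symmetrize σ f - f = f.comp σ := by
  ext x
  simp [Complex.real_smul]

lemma isCondExp_symmetrize [CompactSpace X] (hσ : Function.Involutive σ) :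
    IsCondExp (symmetrize σ) where
  map_add f g := by ext x; simp only [symmetrize_apply, ContinuousMap.add_apply]; ring
  map_smul c f := by
    ext x; simp only [symmetrize_apply, ContinuousMap.smul_apply, smul_eq_mul]; ring
  idem f := by ext x; simp only [symmetrize_apply, hσ x]; ring
  map_one := by ext x; simp only [symmetrize_apply, ContinuousMap.one_apply]; norm_num
  pos f hf := by
    rw [ContinuousMap.le_def] at hf ⊢
    exact fun x => mul_nonneg (by rw [Complex.le_def]; norm_num) (add_nonneg (hf x) (hf (σ x)))
  contractive f := by
    refine (ContinuousMap.norm_le _ (norm_nonneg f)).2 fun x => ?_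
    calc ‖symmetrize σ f x‖ ≤ 2⁻¹ * (‖f x‖ + ‖f (σ x)‖) := by
          rw [symmetrize_apply, norm_mul]
          gcongr
          · norm_num
          · exact norm_add_le _ _
      _ ≤ 2⁻¹ * (‖f‖ + ‖f‖) := by gcongr <;> exact f.norm_coe_le_norm _
      _ = ‖f‖ := by ring
  range_mul f g := by ext x; simp only [symmetrize_apply, ContinuousMap.mul_apply, hσ x]; ring
  range_star f := by
    ext x
    simp only [symmetrize_apply, ContinuousMap.star_apply, star_mul', star_add, star_inv₀,
      star_ofNat, hσ x]
    ring
  bimod f g h := by ext x; simp only [symmetrize_apply, ContinuousMap.mul_apply, hσ x]; ring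

end Symmetrize

section QuasiBasis

variable {X : Type*} [TopologicalSpace X] {σ : C(X, X)} {n : ℕ} {u : Fin n → C(X, ℂ)}

lemma two_mul_apply_of_quasiBasis (hu : ∀ f, f = ∑ i, u i * symmetrize σ (star (u i) * f))
    (f : C(X, ℂ)) (x : X) :
    2 * f x = (∑ i, star (u i) * u i) x * f x +
      (∑ i, u i * (star (u i)).comp σ) x * f (σ x) := by
  conv_lhs => rw [hu f]
  simp only [ContinuousMap.sum_apply, ContinuousMap.mul_apply, symmetrize_apply,
    ContinuousMap.star_apply, ContinuousMap.comp_apply, Finset.mul_sum, Finset.sum_mul,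
    ← Finset.sum_add_distrib]
  refine Finset.sum_congr rfl fun i _ => ?_
  ring

lemma sum_star_mul_self_apply_of_apply_eq
    (hu : ∀ f, f = ∑ i, u i * symmetrize σ (star (u i) * f)) {x : X} (hx : σ x = x) :
    (∑ i, star (u i) * u i) x = 1 := by
  have h := two_mul_apply_of_quasiBasis hu 1 x
  simp only [hx, ContinuousMap.one_apply, mul_one, ContinuousMap.sum_apply,
    ContinuousMap.mul_apply, ContinuousMap.comp_apply, ContinuousMap.star_apply] at h ⊢
  simp_rw [mul_comm (u _ x)] at h
  linear_combination -h / 2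

lemma sum_star_mul_self_apply_of_apply_ne [T35Space X]
    (hu : ∀ f, f = ∑ i, u i * symmetrize σ (star (u i) * f)) {x : X} (hx : σ x ≠ x) :
    (∑ i, star (u i) * u i) x = 2 := by
  obtain ⟨g, hg, hgσx, hgx⟩ :=
    CompletelyRegularSpace.completely_regular (σ x) {x} isClosed_singleton hx
  let f : C(X, ℂ) := ⟨fun y => ((g y : ℝ) : ℂ), by fun_prop⟩
  have hfx : f x = 1 := by simp [f, hgx rfl]
  have hfσx : f (σ x) = 0 := by simp [f, hgσx]
  have h := two_mul_apply_of_quasiBasis hu f x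
  rw [hfx, hfσx, mul_one, mul_one, mul_zero, add_zero] at h
  exact h.symm

theorem not_exists_quasiBasis_symmetrize [T35Space X] {x₀ : X} (hx₀ : σ x₀ = x₀)
    (hclosure : x₀ ∈ closure {x | σ x ≠ x}) :
    ¬ ∃ (n : ℕ) (u : Fin n → C(X, ℂ)),
      ∀ f : C(X, ℂ), f = ∑ i, u i * symmetrize σ (star (u i) * f) := by
  rintro ⟨n, u, hu⟩
  have hclosed : IsClosed {x | (∑ i, star (u i) * u i) x = 2} :=
    isClosed_eq (map_continuous _) continuous_const
  have h2 : (∑ i, star (u i) * u i) x₀ = 2 :=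
    closure_minimal (fun x hx => sum_star_mul_self_apply_of_apply_ne hu hx) hclosed hclosure
  rw [sum_star_mul_self_apply_of_apply_eq hu hx₀] at h2
  norm_num at h2

end QuasiBasis

lemma conjCircle_involutive : Function.Involutive conjCircle := fun z => by
  ext; simp [conjCircle]

lemma one_mem_closure_setOf_conjCircle_ne :
    (⟨1, by simp⟩ : Metric.sphere (0 : ℂ) 1) ∈ closure {z | conjCircle z ≠ z} := by
  let γ : ℝ → Metric.sphere (0 : ℂ) 1 := fun t =>
    ⟨Complex.exp (t * Complex.I), by simp [Complex.norm_exp_ofReal_mul_I]⟩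
  have hγ0 : γ 0 = ⟨1, by simp⟩ := by ext; simp [γ]
  have hγ : Continuous γ := by fun_prop
  refine mem_closure_of_tendsto (b := nhdsWithin 0 (Set.Ioi 0))
    (hγ0 ▸ (hγ.tendsto 0).mono_left nhdsWithin_le_nhds) ?_
  filter_upwards [Ioo_mem_nhdsGT Real.pi_pos] with t ht hfix
  have him := congrArg (fun z : Metric.sphere (0 : ℂ) 1 => (z : ℂ).im) hfix
  simp only [conjCircle, γ, ContinuousMap.coe_mk, Complex.star_def, Complex.conj_im,
    Complex.exp_ofReal_mul_I_im, neg_eq_self] at him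
  exact (Real.sin_pos_of_pos_of_lt_pi ht.1 ht.2).ne' him

theorem Econj_isCondExp_CP_and_no_finite_quasi_basis :
    IsCondExp Econj ∧
    IsCompletelyPositive
      (fun f : C(Metric.sphere (0 : ℂ) 1, ℂ) => (2 : ℝ) • Econj f - f) ∧
    ¬ ∃ (n : ℕ) (u : Fin n → C(Metric.sphere (0 : ℂ) 1, ℂ)),
        ∀ f : C(Metric.sphere (0 : ℂ) 1, ℂ),
          f = ∑ i, u i * Econj (star (u i) * f) := by
  have hE : Econj = symmetrize conjCircle := rfl
  have hCP : (fun f : C(Metric.sphere (0 : ℂ) 1, ℂ) => (2 : ℝ) • Econj f - f) =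
      ContinuousMap.compStarAlgHom' ℂ ℂ conjCircle :=
    funext two_smul_symmetrize_sub
  refine ⟨hE ▸ isCondExp_symmetrize conjCircle_involutive,
    hCP ▸ isCompletelyPositive_of_starRingHom _, hE ▸ ?_⟩
  exact not_exists_quasiBasis_symmetrize (by ext; simp [conjCircle])
    one_mem_closure_setOf_conjCircle_ne

end
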